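/- Let S be a positive integer and ℓ₁, ℓ₂ ∈ ℂ. If g₁ is a mod-S polyexponential of base ℓ₁ and g₂ is a mod-S polyexponential of base ℓ₂, then the convolution g₁ * g₂ is the sum of a mod-S polyexponential of base ℓ₁ and a mod-S polyexponential of base ℓ₂. -/

import Mathlib

/-!
Split a sequence into its residue classes mod `S`: `g = ∑ᵢ spread S i gᵢ` with
`gᵢ n = g (S n + i)`, and `g` is a mod-`S` polyexponential of base `ℓ` exactly when every `gᵢ`
is an ordinary (mod-`1`) one. On generating functions `spread S c` is `H(x) ↦ xᶜ H(xˢ)`, so the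
convolution of two spreads is the spread of the convolution, and the theorem reduces to `S = 1`
(an offset `c ≥ S` only shifts the spread sequence).

For `S = 1`, up to finitely supported errors (whose convolutions are finite sums of shifts),
the convolution is `∑_{a ≤ m} p(a) ℓ₁ᵃ r(m - a) ℓ₂^(m - a)`. Expanding `r(m - a)` by Taylor's
formula in `a` leaves sums `∑_{a ≤ m} u(a) ℓ₁ᵃ ℓ₂^(m - a) = U(m) ℓ₁ᵐ + κ ℓ₂ᵐ`, where `U` solves
`ℓ₁ U(x + 1) - ℓ₂ U(x) = ℓ₁ u(x + 1)`. This difference equation is solvable because the operator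
is triangular on monomials: it preserves degrees if `ℓ₁ ≠ ℓ₂` and lowers them by exactly one if
`ℓ₁ = ℓ₂`.
-/

/-- The convolution of two functions on the non-negative integers:
`(g₁ * g₂)(k) = Σ_{j=0}^{k} g₁(j) g₂(k−j)`. -/
noncomputable def conv (g₁ g₂ : ℕ → ℂ) (k : ℕ) : ℂ :=
  ∑ j ∈ Finset.range (k + 1), g₁ j * g₂ (k - j)

/-- `g : ℕ → ℂ` is a mod-`S` polyexponential of base `ℓ`: there are `K ∈ ℕ` and
polynomials `q₀, …, q_{S−1}` such that for every `k ≥ K`, writing `k = jS + i` with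
`0 ≤ i ≤ S−1` (so `j = k / S` and `i = k % S`), one has `g(k) = q_i(j) ℓ^j`. -/
def IsModPolyexp (S : ℕ) (ℓ : ℂ) (g : ℕ → ℂ) : Prop :=
  ∃ (K : ℕ) (q : ℕ → Polynomial ℂ), ∀ k : ℕ, K ≤ k →
    g k = (q (k % S)).eval ((k / S : ℕ) : ℂ) * ℓ ^ (k / S)

open Polynomial Finset Filter

namespace Polynomial

variable {K : Type*} [Field K]

theorem surjective_of_triangular (Φ : K[X] →ₗ[K] K[X])
    (h : ∀ d, ∃ e, ∃ c ≠ (0 : K), Φ (X ^ e) - C c * X ^ d ∈ degreeLT K d) :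
    Function.Surjective Φ := by
  classical
  have hle : ∀ d, degreeLT K d ≤ LinearMap.range Φ := by
    intro d
    induction d with
    | zero => simp [degreeLT_eq_span_X_pow]
    | succ d ih =>
      rw [degreeLT_eq_span_X_pow, Submodule.span_le, coe_image]
      rintro _ ⟨e, he, rfl⟩
      rcases Nat.lt_succ_iff_lt_or_eq.mp (mem_range.mp he) with he | rfl
      · exact ih (mem_degreeLT.mpr (by simpa using he))
      obtain ⟨e', c, hc, hmem⟩ := h e
      have hX : X ^ e = c⁻¹ • (Φ (X ^ e') - (Φ (X ^ e') - C c * X ^ e)) := by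
        rw [sub_sub_cancel, smul_eq_C_mul, ← mul_assoc, ← C_mul, inv_mul_cancel₀ hc, C_1,
          one_mul]
      change X ^ e ∈ LinearMap.range Φ
      rw [hX]
      exact Submodule.smul_mem _ _ (sub_mem (LinearMap.mem_range_self Φ _) (ih hmem))
  intro W
  exact hle (W.natDegree + 1)
    (mem_degreeLT.mpr (degree_le_natDegree.trans_lt (by exact_mod_cast Nat.lt_succ_self _)))

theorem X_add_one_pow_sub_X_pow_mem_degreeLT (d : ℕ) :
    (X + 1 : K[X]) ^ d - X ^ d ∈ degreeLT K d := by
  rw [add_comm, one_add_X_pow_sub_X_pow]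
  exact sum_mem fun i hi => Submodule.smul_of_tower_mem _ _ (mem_degreeLT.mpr (by simpa using hi))

theorem X_add_one_pow_succ_sub_X_pow_succ_sub_mem_degreeLT (d : ℕ) :
    (X + 1 : K[X]) ^ (d + 1) - X ^ (d + 1) - C ((d : K) + 1) * X ^ d ∈ degreeLT K d := by
  rw [add_comm X, one_add_X_pow_sub_X_pow, sum_range_succ, Nat.choose_succ_self_right,
    nsmul_eq_mul]
  simp only [Nat.cast_add, Nat.cast_one, map_add, map_natCast, map_one, add_sub_cancel_right]
  exact sum_mem fun i hi => Submodule.smul_of_tower_mem _ _ (mem_degreeLT.mpr (by simpa using hi))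

theorem surjective_smul_taylor_one_sub_smul_id {ℓ₁ ℓ₂ : K} (h : ℓ₁ ≠ ℓ₂) :
    Function.Surjective (ℓ₁ • taylor (1 : K) - ℓ₂ • LinearMap.id (R := K) (M := K[X])) := by
  refine surjective_of_triangular _ fun d => ⟨d, ℓ₁ - ℓ₂, sub_ne_zero.mpr h, ?_⟩
  have hX : (ℓ₁ • taylor (1 : K) - ℓ₂ • LinearMap.id (R := K) (M := K[X])) (X ^ d) -
      C (ℓ₁ - ℓ₂) * X ^ d = ℓ₁ • ((X + 1) ^ d - X ^ d) := by
    simp only [LinearMap.sub_apply, LinearMap.smul_apply, taylor_X_pow, map_one,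
      LinearMap.id_apply, smul_eq_C_mul, map_sub]
    ring
  rw [hX]
  exact Submodule.smul_mem _ _ (X_add_one_pow_sub_X_pow_mem_degreeLT d)

theorem surjective_taylor_one_sub_id [CharZero K] :
    Function.Surjective (taylor (1 : K) - LinearMap.id (R := K) (M := K[X])) := by
  refine surjective_of_triangular _ fun d => ⟨d + 1, d + 1, Nat.cast_add_one_ne_zero d, ?_⟩
  simpa only [LinearMap.sub_apply, taylor_X_pow, map_one, LinearMap.id_apply]
    using X_add_one_pow_succ_sub_X_pow_succ_sub_mem_degreeLT d

theorem exists_mul_eval_add_one_sub_mul_eval [CharZero K] (ℓ₁ ℓ₂ : K) (W : K[X]) :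
    ∃ U : K[X], ∀ x, ℓ₁ * U.eval (x + 1) - ℓ₂ * U.eval x = ℓ₁ * W.eval x := by
  rcases eq_or_ne ℓ₁ ℓ₂ with rfl | h
  · obtain ⟨U, hU⟩ := surjective_taylor_one_sub_id W
    refine ⟨U, fun x => ?_⟩
    have hx := congrArg (eval x) hU
    simp only [LinearMap.sub_apply, taylor_eval, LinearMap.id_apply, eval_sub] at hx
    rw [← hx]
    ring
  · obtain ⟨U, hU⟩ := surjective_smul_taylor_one_sub_smul_id h (C ℓ₁ * W)
    refine ⟨U, fun x => ?_⟩
    simpa [taylor_eval, add_comm] using congrArg (eval x) hU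

theorem exists_sum_range_eval_mul_pow_mul_pow [CharZero K] (ℓ₁ ℓ₂ : K) (u : K[X]) :
    ∃ (U : K[X]) (κ : K), ∀ m : ℕ,
      ∑ a ∈ range (m + 1), u.eval (a : K) * ℓ₁ ^ a * ℓ₂ ^ (m - a) =
        U.eval (m : K) * ℓ₁ ^ m + κ * ℓ₂ ^ m := by
  obtain ⟨U, hU⟩ := exists_mul_eval_add_one_sub_mul_eval ℓ₁ ℓ₂ (u.comp (X + 1))
  refine ⟨U, u.eval 0 - U.eval 0, fun m => ?_⟩
  induction m with
  | zero => simp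
  | succ m ih =>
    have hshift : ∀ a ∈ range (m + 1), u.eval (a : K) * ℓ₁ ^ a * ℓ₂ ^ (m + 1 - a) =
        ℓ₂ * (u.eval (a : K) * ℓ₁ ^ a * ℓ₂ ^ (m - a)) := fun a ha => by
      rw [Nat.sub_add_comm (Nat.lt_succ_iff.mp (mem_range.mp ha)), pow_succ]
      ring
    have hm := hU m
    simp only [eval_comp, eval_add, eval_X, eval_one] at hm
    rw [sum_range_succ, sum_congr rfl hshift, ← mul_sum, ih, Nat.sub_self, pow_zero]
    push_cast
    linear_combination -ℓ₁ ^ m * hm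

theorem eval_add_eq_sum_hasseDeriv {R : Type*} [CommSemiring R] (f : R[X]) (x y : R) :
    f.eval (x + y) = ∑ c ∈ range (f.natDegree + 1), (hasseDeriv c f).eval x * y ^ c := by
  rw [add_comm, ← taylor_eval, eval_eq_sum_range, natDegree_taylor]
  simp only [taylor_coeff]

end Polynomial

theorem conv_eq_sum_antidiagonal (f g : ℕ → ℂ) (k : ℕ) :
    conv f g k = ∑ x ∈ antidiagonal k, f x.1 * g x.2 :=
  (Nat.sum_antidiagonal_eq_sum_range_succ (fun i j => f i * g j) k).symm

theorem conv_comm (f g : ℕ → ℂ) : conv f g = conv g f := by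
  ext k
  rw [conv_eq_sum_antidiagonal, conv_eq_sum_antidiagonal, ← Nat.sum_antidiagonal_swap]
  simp only [Prod.fst_swap, Prod.snd_swap, mul_comm]

theorem conv_add_left (f₁ f₂ g : ℕ → ℂ) : conv (f₁ + f₂) g = conv f₁ g + conv f₂ g := by
  ext k
  simp only [conv, Pi.add_apply, add_mul, sum_add_distrib]

theorem conv_add_right (f g₁ g₂ : ℕ → ℂ) : conv f (g₁ + g₂) = conv f g₁ + conv f g₂ := by
  rw [conv_comm, conv_add_left, conv_comm g₁, conv_comm g₂]

theorem conv_sum_sum {ι κ : Type*} (s : Finset ι) (t : Finset κ) (f : ι → ℕ → ℂ)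
    (g : κ → ℕ → ℂ) :
    conv (∑ i ∈ s, f i) (∑ j ∈ t, g j) = ∑ i ∈ s, ∑ j ∈ t, conv (f i) (g j) := by
  ext k
  simp only [conv, Finset.sum_apply, sum_mul_sum]
  rw [sum_comm]
  exact sum_congr rfl fun i _ => sum_comm

theorem exists_conv_eval_mul_pow_eq (ℓ₁ ℓ₂ : ℂ) (p r : ℂ[X]) :
    ∃ P R : ℂ[X], ∀ m : ℕ,
      conv (fun n => p.eval (n : ℂ) * ℓ₁ ^ n) (fun n => r.eval (n : ℂ) * ℓ₂ ^ n) m =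
        P.eval (m : ℂ) * ℓ₁ ^ m + R.eval (m : ℂ) * ℓ₂ ^ m := by
  choose U κ hU using fun c => exists_sum_range_eval_mul_pow_mul_pow ℓ₁ ℓ₂ (p * (-X) ^ c)
  set s := range (r.natDegree + 1)
  refine ⟨∑ c ∈ s, hasseDeriv c r * U c, ∑ c ∈ s, C (κ c) * hasseDeriv c r, fun m => ?_⟩
  have htaylor : ∀ a ∈ range (m + 1),
      p.eval (a : ℂ) * ℓ₁ ^ a * (r.eval ((m - a : ℕ) : ℂ) * ℓ₂ ^ (m - a)) =
        ∑ c ∈ s, (hasseDeriv c r).eval (m : ℂ) *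
          ((p * (-X) ^ c).eval (a : ℂ) * ℓ₁ ^ a * ℓ₂ ^ (m - a)) := fun a ha => by
    rw [Nat.cast_sub (Nat.lt_succ_iff.mp (mem_range.mp ha)), sub_eq_add_neg,
      eval_add_eq_sum_hasseDeriv, sum_mul, mul_sum]
    refine sum_congr rfl fun c _ => ?_
    simp only [eval_mul, eval_pow, eval_neg, eval_X]
    ring
  rw [conv, sum_congr rfl htaylor, sum_comm]
  simp only [← mul_sum, hU, eval_finsetSum, sum_mul, ← sum_add_distrib]
  exact sum_congr rfl fun c _ => by simp only [eval_mul, eval_C]; ring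

def modPolyexp (S : ℕ) (ℓ : ℂ) : Submodule ℂ (ℕ → ℂ) where
  carrier := {g | IsModPolyexp S ℓ g}
  zero_mem' := ⟨0, 0, fun k _ => by simp⟩
  add_mem' := by
    rintro f g ⟨K₁, q₁, hf⟩ ⟨K₂, q₂, hg⟩
    refine ⟨max K₁ K₂, q₁ + q₂, fun k hk => ?_⟩
    simp only [Pi.add_apply, eval_add, add_mul]
    rw [hf k (le_of_max_le_left hk), hg k (le_of_max_le_right hk)]
  smul_mem' := by
    rintro c g ⟨K, q, hg⟩
    refine ⟨K, fun i => C c * q i, fun k hk => ?_⟩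
    simp only [Pi.smul_apply, smul_eq_mul, eval_mul, eval_C, hg k hk, mul_assoc]

theorem isModPolyexp_one_iff {ℓ : ℂ} {g : ℕ → ℂ} :
    IsModPolyexp 1 ℓ g ↔ ∃ (K : ℕ) (p : ℂ[X]), ∀ n, K ≤ n → g n = p.eval (n : ℂ) * ℓ ^ n := by
  simp only [IsModPolyexp, Nat.mod_one, Nat.div_one]
  exact ⟨fun ⟨K, q, h⟩ => ⟨K, q 0, h⟩, fun ⟨K, p, h⟩ => ⟨K, fun _ => p, h⟩⟩

theorem isModPolyexp_one_eval_mul_pow (p : ℂ[X]) (ℓ : ℂ) :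
    IsModPolyexp 1 ℓ (fun n => p.eval (n : ℂ) * ℓ ^ n) :=
  isModPolyexp_one_iff.mpr ⟨0, p, fun _ _ => rfl⟩

namespace IsModPolyexp

variable {S : ℕ} {ℓ : ℂ} {f g : ℕ → ℂ}

theorem congr (hf : IsModPolyexp S ℓ f) (h : f =ᶠ[atTop] g) : IsModPolyexp S ℓ g := by
  obtain ⟨K, q, hq⟩ := hf
  obtain ⟨N, hN⟩ := eventually_atTop.mp h
  exact ⟨max K N, q, fun k hk =>
    (hN k (le_of_max_le_right hk)).symm.trans (hq k (le_of_max_le_left hk))⟩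

theorem comp_sub (hg : IsModPolyexp 1 ℓ g) (j : ℕ) : IsModPolyexp 1 ℓ (fun n => g (n - j)) := by
  obtain ⟨K, p, hp⟩ := isModPolyexp_one_iff.mp hg
  rcases eq_or_ne ℓ 0 with rfl | hℓ
  · refine isModPolyexp_one_iff.mpr ⟨K + j + 1, 0, fun n hn => ?_⟩
    rw [hp _ (by omega), zero_pow (by omega), eval_zero, zero_mul, mul_zero]
  · refine isModPolyexp_one_iff.mpr ⟨K + j, C (ℓ ^ j)⁻¹ * p.comp (X - C (j : ℂ)), fun n hn => ?_⟩
    rw [hp _ (by omega), eval_mul, eval_C, eval_comp, eval_sub, eval_X, eval_C,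
      Nat.cast_sub (by omega), ← pow_sub_mul_pow ℓ (by omega : j ≤ n)]
    field_simp

theorem conv_of_eventually_zero {e : ℕ → ℂ} {K : ℕ} (he : ∀ n, K ≤ n → e n = 0)
    (hg : IsModPolyexp 1 ℓ g) : IsModPolyexp 1 ℓ (conv e g) := by
  have hsum : IsModPolyexp 1 ℓ (∑ j ∈ range K, e j • fun n => g (n - j)) :=
    (modPolyexp 1 ℓ).sum_mem fun j _ => (modPolyexp 1 ℓ).smul_mem (e j) (hg.comp_sub j)
  refine hsum.congr (eventually_atTop.mpr ⟨K, fun n hn => ?_⟩)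
  simp only [Finset.sum_apply, Pi.smul_apply, smul_eq_mul]
  refine sum_subset (range_subset_range.mpr (by omega)) fun j _ hj => ?_
  rw [he j (by simpa using hj), zero_mul]

theorem comp_mul_add (hg : IsModPolyexp S ℓ g) {i : ℕ} (hi : i < S) :
    IsModPolyexp 1 ℓ (fun n => g (S * n + i)) := by
  obtain ⟨K, q, hq⟩ := hg
  refine isModPolyexp_one_iff.mpr ⟨K, q i, fun n hn => ?_⟩
  have hmod : (S * n + i) % S = i := by rw [Nat.mul_add_mod, Nat.mod_eq_of_lt hi]
  have hdiv : (S * n + i) / S = n := by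
    rw [Nat.mul_add_div (by omega), Nat.div_eq_of_lt hi, add_zero]
  rw [hq _ (by nlinarith), hmod, hdiv]

end IsModPolyexp

theorem conv_modPolyexp_one {ℓ₁ ℓ₂ : ℂ} {u₁ u₂ : ℕ → ℂ} (hu₁ : IsModPolyexp 1 ℓ₁ u₁)
    (hu₂ : IsModPolyexp 1 ℓ₂ u₂) :
    ∃ f₁ f₂ : ℕ → ℂ, IsModPolyexp 1 ℓ₁ f₁ ∧ IsModPolyexp 1 ℓ₂ f₂ ∧ conv u₁ u₂ = f₁ + f₂ := by
  obtain ⟨K₁, p₁, hp₁⟩ := isModPolyexp_one_iff.mp hu₁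
  obtain ⟨K₂, p₂, hp₂⟩ := isModPolyexp_one_iff.mp hu₂
  set P₁ : ℕ → ℂ := fun n => p₁.eval (n : ℂ) * ℓ₁ ^ n
  set P₂ : ℕ → ℂ := fun n => p₂.eval (n : ℂ) * ℓ₂ ^ n
  obtain ⟨P, R, hPR⟩ := exists_conv_eval_mul_pow_eq ℓ₁ ℓ₂ p₁ p₂
  have he₁ : ∀ n, K₁ ≤ n → (u₁ - P₁) n = 0 := fun n hn => sub_eq_zero.mpr (hp₁ n hn)
  have he₂ : ∀ n, K₂ ≤ n → (u₂ - P₂) n = 0 := fun n hn => sub_eq_zero.mpr (hp₂ n hn)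
  have hsplit : conv u₁ u₂ = conv P₁ P₂ + conv P₁ (u₂ - P₂) + conv (u₁ - P₁) u₂ := by
    rw [← conv_add_right, add_sub_cancel, ← conv_add_left, add_sub_cancel]
  refine ⟨(fun n : ℕ => P.eval (n : ℂ) * ℓ₁ ^ n) + conv (u₂ - P₂) P₁,
    (fun n : ℕ => R.eval (n : ℂ) * ℓ₂ ^ n) + conv (u₁ - P₁) u₂,
    (modPolyexp 1 ℓ₁).add_mem (isModPolyexp_one_eval_mul_pow P ℓ₁)
      ((isModPolyexp_one_eval_mul_pow p₁ ℓ₁).conv_of_eventually_zero he₂),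
    (modPolyexp 1 ℓ₂).add_mem (isModPolyexp_one_eval_mul_pow R ℓ₂)
      (hu₂.conv_of_eventually_zero he₁), ?_⟩
  rw [hsplit, show conv P₁ P₂ = _ + _ from funext hPR, conv_comm P₁]
  abel

def spread (S c : ℕ) (u : ℕ → ℂ) (k : ℕ) : ℂ :=
  if c ≤ k ∧ S ∣ k - c then u ((k - c) / S) else 0

section spread

variable {S c : ℕ} {u : ℕ → ℂ}

theorem spread_mul_add (hS : 0 < S) (a : ℕ) : spread S c u (S * a + c) = u a := by
  simp [spread, hS]

theorem spread_eq_zero_of_forall_ne {k : ℕ} (hk : ∀ a, S * a + c ≠ k) : spread S c u k = 0 := by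
  rw [spread, if_neg]
  rintro ⟨hck, a, ha⟩
  exact hk a (by omega)

theorem spread_add (f g : ℕ → ℂ) : spread S c (f + g) = spread S c f + spread S c g := by
  ext k
  simp only [spread, Pi.add_apply]
  split_ifs <;> simp

theorem sum_spread_residues (hS : 0 < S) (g : ℕ → ℂ) :
    ∑ i : Fin S, spread S i (fun n => g (S * n + i)) = g := by
  ext k
  rw [Finset.sum_apply, sum_eq_single_of_mem ⟨k % S, Nat.mod_lt k hS⟩ (mem_univ _)]
  · simpa only [Nat.div_add_mod] using
      spread_mul_add hS (c := k % S) (u := fun n => g (S * n + k % S)) (k / S)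
  · refine fun i _ hik => spread_eq_zero_of_forall_ne fun a ha => hik (Fin.ext ?_)
    subst ha
    simp only [Nat.mul_add_mod, Nat.mod_eq_of_lt i.isLt]

theorem conv_spread (hS : 0 < S) {c' : ℕ} (v : ℕ → ℂ) :
    conv (spread S c u) (spread S c' v) = spread S (c + c') (conv u v) := by
  have hsupp : ∀ x : ℕ × ℕ, spread S c u x.1 * spread S c' v x.2 ≠ 0 →
      ∃ a b, S * a + c = x.1 ∧ S * b + c' = x.2 := fun x hx => by
    obtain ⟨a, ha⟩ : ∃ a, S * a + c = x.1 := by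
      by_contra! hne
      exact hx (by rw [spread_eq_zero_of_forall_ne hne, zero_mul])
    obtain ⟨b, hb⟩ : ∃ b, S * b + c' = x.2 := by
      by_contra! hne
      exact hx (by rw [spread_eq_zero_of_forall_ne hne, mul_zero])
    exact ⟨a, b, ha, hb⟩
  ext k
  rw [conv_eq_sum_antidiagonal]
  by_cases hk : ∃ m, S * m + (c + c') = k
  · obtain ⟨m, rfl⟩ := hk
    rw [spread_mul_add hS, conv_eq_sum_antidiagonal]
    symm
    refine sum_bij_ne_zero (fun x _ _ => (S * x.1 + c, S * x.2 + c')) ?_ ?_ ?_ ?_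
    · rintro ⟨a, b⟩ hab _
      rw [HasAntidiagonal.mem_antidiagonal] at hab ⊢
      rw [← hab]
      ring
    · rintro ⟨a, b⟩ _ _ ⟨a', b'⟩ _ _ hab
      simp only [Prod.mk.injEq, add_left_inj, mul_right_inj' hS.ne'] at hab
      rw [hab.1, hab.2]
    · intro x hx hne
      obtain ⟨a, b, ha, hb⟩ := hsupp x hne
      refine ⟨(a, b), ?_, ?_, Prod.ext ha hb⟩
      · rw [HasAntidiagonal.mem_antidiagonal] at hx ⊢
        exact Nat.eq_of_mul_eq_mul_left hS (by linarith)
      · rwa [← ha, ← hb, spread_mul_add hS, spread_mul_add hS] at hne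
    · intro x _ _
      rw [spread_mul_add hS, spread_mul_add hS]
  · rw [spread_eq_zero_of_forall_ne fun m hm => hk ⟨m, hm⟩]
    refine sum_eq_zero fun x hx => ?_
    by_contra hne
    obtain ⟨a, b, ha, hb⟩ := hsupp x hne
    rw [HasAntidiagonal.mem_antidiagonal] at hx
    exact hk ⟨a + b, by rw [← hx, ← ha, ← hb]; ring⟩

theorem isModPolyexp_spread (hS : 0 < S) {ℓ : ℂ} (hu : IsModPolyexp 1 ℓ u) (c : ℕ) :
    IsModPolyexp S ℓ (spread S c u) := by
  obtain ⟨K, p, hp⟩ := isModPolyexp_one_iff.mp (hu.comp_sub (c / S))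
  refine ⟨S * K + c, fun i => if i = c % S then p else 0, fun k hk => ?_⟩
  by_cases hkc : k % S = c % S
  · have hk' : S * (k / S - c / S) + c = k := by
      have := Nat.div_add_mod k S
      have := Nat.div_add_mod c S
      rw [Nat.mul_sub]
      omega
    have hK : K ≤ k / S := (Nat.le_div_iff_mul_le hS).mpr (by rw [mul_comm]; omega)
    calc spread S c u k = u (k / S - c / S) := by
          conv_lhs => rw [← hk']
          exact spread_mul_add hS _
      _ = _ := by simp only [hp _ hK, hkc, ↓reduceIte]
  · simp only [hkc, ↓reduceIte, eval_zero, zero_mul]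
    exact spread_eq_zero_of_forall_ne fun a ha => hkc (by rw [← ha, Nat.mul_add_mod])

end spread

/-- The convolution of a mod-`S` polyexponential of base `ℓ₁` with a mod-`S`
polyexponential of base `ℓ₂` is the sum of a mod-`S` polyexponential of base `ℓ₁`
and a mod-`S` polyexponential of base `ℓ₂`. -/
theorem conv_modPolyexp (S : ℕ) (hS : 0 < S) (ℓ₁ ℓ₂ : ℂ) (g₁ g₂ : ℕ → ℂ)
    (h₁ : IsModPolyexp S ℓ₁ g₁) (h₂ : IsModPolyexp S ℓ₂ g₂) :
    ∃ f₁ f₂ : ℕ → ℂ, IsModPolyexp S ℓ₁ f₁ ∧ IsModPolyexp S ℓ₂ f₂ ∧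
      ∀ k : ℕ, conv g₁ g₂ k = f₁ k + f₂ k := by
  choose F₁ F₂ hF₁ hF₂ hF using fun i j : Fin S =>
    conv_modPolyexp_one (h₁.comp_mul_add i.isLt) (h₂.comp_mul_add j.isLt)
  refine ⟨∑ i : Fin S, ∑ j : Fin S, spread S (i + j : ℕ) (F₁ i j),
    ∑ i : Fin S, ∑ j : Fin S, spread S (i + j : ℕ) (F₂ i j),
    (modPolyexp S ℓ₁).sum_mem fun i _ => (modPolyexp S ℓ₁).sum_mem fun j _ =>
      isModPolyexp_spread hS (hF₁ i j) _,
    (modPolyexp S ℓ₂).sum_mem fun i _ => (modPolyexp S ℓ₂).sum_mem fun j _ =>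
      isModPolyexp_spread hS (hF₂ i j) _, fun k => ?_⟩
  rw [← sum_spread_residues hS g₁, ← sum_spread_residues hS g₂, conv_sum_sum]
  simp only [conv_spread hS, hF, spread_add, Finset.sum_apply, Pi.add_apply, sum_add_distrib]
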